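/- arXiv:2502.19819 — 2 statements merged into one kernel-verified Lean document; each statement's English description precedes it below -/
import Mathlib

section
/- Let 1 < p < 2. For all y₁, y₂ ∈ R^N one has (|y₁|^{p-2} y₁ − |y₂|^{p-2} y₂) · (y₁ − y₂) ≥ (p−1)(1 + |y₁|² + |y₂|²)^{(p-2)/2} |y₁ − y₂|². -/
/-!
Write `a = ‖y₁‖`, `b = ‖y₂‖`, `s = ⟪y₁, y₂⟫`. Both sides of the inequality are affine in `s`,
and Cauchy–Schwarz confines `s` to `[-a b, a b]`, so it suffices to check the two endpoints,
which are one-dimensional inequalities for `t ↦ t ^ (p - 1)`: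
`(p - 1) M (a - b)² ≤ (a ^ (p - 1) - b ^ (p - 1)) (a - b)` (concavity of `t ^ (p - 1)`) and
`(p - 1) M (a + b)² ≤ (a ^ (p - 1) + b ^ (p - 1)) (a + b)`,
where `M = (1 + a² + b²) ^ ((p - 2) / 2) ≤ max a b ^ (p - 2)` since `p - 2 ≤ 0`.
-/

open scoped RealInnerProductSpace

namespace Real

theorem mul_rpow_sub_one_mul_sub_le_rpow_sub_rpow {q a b : ℝ} (hq₀ : 0 ≤ q) (hq₁ : q ≤ 1)
    (hb : 0 ≤ b) (hba : b ≤ a) : q * a ^ (q - 1) * (a - b) ≤ a ^ q - b ^ q := by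
  obtain rfl | ha := (hb.trans hba).eq_or_lt
  · obtain rfl := le_antisymm hba hb
    simp
  have bernoulli := rpow_one_add_le_one_add_mul_self (s := b / a - 1)
    (by linarith [div_nonneg hb ha.le]) hq₀ hq₁
  rw [add_sub_cancel, div_rpow hb ha.le, div_le_iff₀ (rpow_pos_of_pos ha q)] at bernoulli
  rw [rpow_sub_one ha.ne']
  linear_combination bernoulli + q * div_mul_cancel₀ (a ^ q) ha.ne'

theorem rpow_half_le_rpow_of_sq_le {r x K : ℝ} (hr : r ≤ 0) (hx : 0 < x) (hxK : x ^ 2 ≤ K) :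
    K ^ (r / 2) ≤ x ^ r :=
  calc K ^ (r / 2) ≤ (x ^ 2) ^ (r / 2) := rpow_le_rpow_of_nonpos (by positivity) hxK (by linarith)
    _ = x ^ r := by rw [← rpow_natCast, ← rpow_mul hx.le]; congr 1; ring

theorem rpow_half_mul_le_rpow {q x K : ℝ} (hq : q ≤ 1) (hx : 0 ≤ x) (hxK : x ^ 2 ≤ K) :
    K ^ ((q - 1) / 2) * x ≤ x ^ q := by
  obtain rfl | hx := hx.eq_or_lt
  · simpa using rpow_nonneg le_rfl q
  calc K ^ ((q - 1) / 2) * x ≤ x ^ (q - 1) * x := by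
        gcongr; exact rpow_half_le_rpow_of_sq_le (by linarith) hx hxK
    _ = x ^ q := by rw [rpow_sub_one hx.ne', div_mul_cancel₀ _ hx.ne']

theorem mul_rpow_half_mul_sq_sub_le {q a b K : ℝ} (hq₀ : 0 ≤ q) (hq₁ : q ≤ 1)
    (ha : 0 ≤ a) (hb : 0 ≤ b) (haK : a ^ 2 ≤ K) (hbK : b ^ 2 ≤ K) :
    q * K ^ ((q - 1) / 2) * (a - b) ^ 2 ≤ (a ^ q - b ^ q) * (a - b) := by
  wlog hba : b ≤ a generalizing a b
  · convert this hb ha hbK haK (le_of_not_ge hba) using 1 <;> ring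
  obtain rfl | ha := ha.eq_or_lt
  · obtain rfl := le_antisymm hba hb
    simp
  have hM : K ^ ((q - 1) / 2) ≤ a ^ (q - 1) := rpow_half_le_rpow_of_sq_le (by linarith) ha haK
  have hab : 0 ≤ a - b := sub_nonneg.mpr hba
  calc q * K ^ ((q - 1) / 2) * (a - b) ^ 2 = q * K ^ ((q - 1) / 2) * (a - b) * (a - b) := by ring
    _ ≤ q * a ^ (q - 1) * (a - b) * (a - b) := by gcongr
    _ ≤ (a ^ q - b ^ q) * (a - b) := by
        gcongr; exact mul_rpow_sub_one_mul_sub_le_rpow_sub_rpow hq₀ hq₁ hb hba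

theorem mul_rpow_half_mul_sq_add_le {q a b K : ℝ} (hq₁ : q ≤ 1)
    (ha : 0 ≤ a) (hb : 0 ≤ b) (haK : a ^ 2 ≤ K) (hbK : b ^ 2 ≤ K) :
    q * K ^ ((q - 1) / 2) * (a + b) ^ 2 ≤ (a ^ q + b ^ q) * (a + b) := by
  have hM : 0 ≤ K ^ ((q - 1) / 2) := rpow_nonneg ((sq_nonneg a).trans haK) _
  calc q * K ^ ((q - 1) / 2) * (a + b) ^ 2 ≤ 1 * K ^ ((q - 1) / 2) * (a + b) ^ 2 := by gcongr
    _ = (K ^ ((q - 1) / 2) * a + K ^ ((q - 1) / 2) * b) * (a + b) := by ring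
    _ ≤ (a ^ q + b ^ q) * (a + b) := by
        gcongr <;> exact rpow_half_mul_le_rpow hq₁ ‹_› ‹_›

end Real

theorem add_mul_nonneg_of_abs_le {α β s m : ℝ} (hs : |s| ≤ m) (h_top : 0 ≤ α + β * m)
    (h_bot : 0 ≤ α - β * m) : 0 ≤ α + β * s := by
  obtain ⟨hs₁, hs₂⟩ := abs_le.mp hs
  rcases le_total 0 β with hβ | hβ
  · nlinarith [mul_le_mul_of_nonneg_left hs₁ hβ]
  · nlinarith [mul_le_mul_of_nonpos_left hs₂ hβ]

theorem inner_smul_sub_smul_sub {E : Type*} [NormedAddCommGroup E] [InnerProductSpace ℝ E]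
    (u v : ℝ) (x y : E) :
    ⟪u • x - v • y, x - y⟫ = u * ‖x‖ ^ 2 + v * ‖y‖ ^ 2 - (u + v) * ⟪x, y⟫ := by
  simp only [inner_sub_left, inner_sub_right, real_inner_smul_left, real_inner_self_eq_norm_sq,
    real_inner_comm x y]
  ring

theorem sub_one_mul_rpow_half_mul_le {p a b s : ℝ} (hp₁ : 1 < p) (hp₂ : p ≤ 2)
    (ha : 0 ≤ a) (hb : 0 ≤ b) (hs : |s| ≤ a * b) :
    (p - 1) * (1 + a ^ 2 + b ^ 2) ^ ((p - 2) / 2) * (a ^ 2 - 2 * s + b ^ 2) ≤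
      a ^ (p - 2) * a ^ 2 + b ^ (p - 2) * b ^ 2 - (a ^ (p - 2) + b ^ (p - 2)) * s := by
  set K := 1 + a ^ 2 + b ^ 2
  have haK : a ^ 2 ≤ K := by linarith [sq_nonneg b]
  have hbK : b ^ 2 ≤ K := by linarith [sq_nonneg a]
  have hpow : ∀ x : ℝ, 0 ≤ x → x ^ (p - 1) = x ^ (p - 2) * x := fun x hx => by
    rw [← Real.rpow_add_one' hx (by linarith)]; congr 1; ring
  have h_diff :=
    Real.mul_rpow_half_mul_sq_sub_le (q := p - 1) (by linarith) (by linarith) ha hb haK hbK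
  have h_sum := Real.mul_rpow_half_mul_sq_add_le (q := p - 1) (by linarith) ha hb haK hbK
  rw [show p - 1 - 1 = p - 2 by ring, hpow a ha, hpow b hb] at h_diff h_sum
  set c := (p - 1) * K ^ ((p - 2) / 2)
  have h_affine := add_mul_nonneg_of_abs_le hs
    (α := a ^ (p - 2) * a ^ 2 + b ^ (p - 2) * b ^ 2 - c * (a ^ 2 + b ^ 2))
    (β := 2 * c - (a ^ (p - 2) + b ^ (p - 2))) (by linear_combination h_diff)
    (by linear_combination h_sum)
  linear_combination h_affine

theorem inner_rpow_smul_sub_rpow_smul_ge {E : Type*} [NormedAddCommGroup E]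
    [InnerProductSpace ℝ E] {p : ℝ} (hp₁ : 1 < p) (hp₂ : p ≤ 2) (x y : E) :
    (p - 1) * (1 + ‖x‖ ^ 2 + ‖y‖ ^ 2) ^ ((p - 2) / 2) * ‖x - y‖ ^ 2 ≤
      ⟪‖x‖ ^ (p - 2) • x - ‖y‖ ^ (p - 2) • y, x - y⟫ := by
  rw [inner_smul_sub_smul_sub, norm_sub_sq_real]
  exact sub_one_mul_rpow_half_mul_le hp₁ hp₂ (norm_nonneg x) (norm_nonneg y)
    (abs_real_inner_le_norm x y)

theorem stmt_7 {N : ℕ} (p : ℝ) (hp1 : 1 < p) (hp2 : p < 2)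
    (y₁ y₂ : EuclideanSpace ℝ (Fin N)) :
    ⟪‖y₁‖ ^ (p - 2) • y₁ - ‖y₂‖ ^ (p - 2) • y₂, y₁ - y₂⟫ ≥
      (p - 1) * (1 + ‖y₁‖ ^ 2 + ‖y₂‖ ^ 2) ^ ((p - 2) / 2) * ‖y₁ - y₂‖ ^ 2 :=
  inner_rpow_smul_sub_rpow_smul_ge hp1 hp2.le y₁ y₂
end

section
/- Let (X,d) be a complete metric space, D ⊆ Σ ⊆ X with Σ closed and D nonempty, Γ := Σ \ D, k > 0, and M : D → (0,∞) bounded on compact subsets of D. If x ∈ D satisfies M(x) > 2k/d(x,Γ), then there exists y ∈ D such that M(y) > 2k/d(y,Γ), M(y) ≥ M(x), and M(z) ≤ 2 M(y) for all z ∈ D with d(z,y) ≤ k/M(y). -/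
/-!
Call `y ∈ D` admissible if `M(y) > 2k / d(y, Γ)` and `M(y) ≥ M(x)`. If no admissible `y` works,
each admissible `y` has an admissible neighbour `z` with `d(z, y) ≤ k / M(y)` and `M(z) > 2 M(y)`;
admissibility passes to `z` because the ball of radius `k / M(y)` uses only half of the margin
`2k / M(y) < d(y, Γ)`. Iterating gives a sequence along which `M` at least doubles, so the steps
shrink geometrically: the sequence is Cauchy and its limit `a` lies within `2k / M(x)` of `x`, hence
off `Γ` and, `Σ` being closed, in `D`. Then `{a} ∪ {xₙ}` is a compact subset of `D` on which `M` is
unbounded.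
-/

open Metric

theorem exists_seq_of_forall_exists {α : Type*} {P : α → Prop} {R : α → α → Prop} {a : α}
    (ha : P a) (step : ∀ y, P y → ∃ z, P z ∧ R y z) :
    ∃ v : ℕ → α, v 0 = a ∧ ∀ n, P (v n) ∧ R (v n) (v (n + 1)) := by
  choose f hfP hfR using step
  let g : {y // P y} → {y // P y} := fun y => ⟨f y.1 y.2, hfP y.1 y.2⟩
  exact ⟨fun n => (g^[n] ⟨a, ha⟩).1, rfl, fun n =>
    ⟨(g^[n] ⟨a, ha⟩).2, by simpa [Function.iterate_succ_apply'] using hfR _ (g^[n] ⟨a, ha⟩).2⟩⟩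

theorem two_pow_mul_le_of_two_mul_le {f : ℕ → ℝ} (hf : ∀ n, 2 * f n ≤ f (n + 1)) (n : ℕ) :
    2 ^ n * f 0 ≤ f n := by
  induction n with
  | zero => simp
  | succ n ih => calc
      2 ^ (n + 1) * f 0 = 2 * (2 ^ n * f 0) := by ring
      _ ≤ 2 * f n := by linarith
      _ ≤ f (n + 1) := hf n

section PseudoMetric

variable {X : Type*} [PseudoMetricSpace X] {Γ : Set X}

theorem ofReal_div_lt_infEDist_of_dist_le {k a b : ℝ} {y z : X} (hk : 0 ≤ k) (ha : 0 < a)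
    (hab : 2 * a ≤ b) (hy : ENNReal.ofReal (2 * k / a) < infEDist y Γ)
    (hzy : dist z y ≤ k / a) : ENNReal.ofReal (2 * k / b) < infEDist z Γ := by
  have hhalf : ENNReal.ofReal (k / a) < infEDist z Γ := by
    refine lt_of_add_lt_add_right (a := ENNReal.ofReal (k / a)) ?_
    calc ENNReal.ofReal (k / a) + ENNReal.ofReal (k / a)
        = ENNReal.ofReal (2 * k / a) := by
          rw [← ENNReal.ofReal_add (by positivity) (by positivity)]; ring_nf
      _ < infEDist y Γ := hy
      _ ≤ infEDist z Γ + edist y z := infEDist_le_infEDist_add_edist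
      _ ≤ infEDist z Γ + ENNReal.ofReal (k / a) := by
          rw [edist_dist, dist_comm]; gcongr
  refine lt_of_le_of_lt (ENNReal.ofReal_le_ofReal ?_) hhalf
  rw [div_le_div_iff₀ (by linarith) ha]
  nlinarith

theorem infEDist_pos_of_dist_le {r : ℝ} {x a : X} (hx : ENNReal.ofReal r < infEDist x Γ)
    (hxa : dist x a ≤ r) : 0 < infEDist a Γ := by
  refine pos_iff_ne_zero.2 fun h0 => hx.not_ge ?_
  calc infEDist x Γ ≤ infEDist a Γ + edist x a := infEDist_le_infEDist_add_edist
    _ ≤ ENNReal.ofReal r := by rw [h0, zero_add, edist_dist]; exact ENNReal.ofReal_le_ofReal hxa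

theorem dist_succ_le_geometric_two_of_doubling {k : ℝ} {M : X → ℝ} {v : ℕ → X} (hk : 0 ≤ k)
    (h0 : 0 < M (v 0)) (hd : ∀ n, dist (v n) (v (n + 1)) ≤ k / M (v n))
    (hM : ∀ n, 2 * M (v n) ≤ M (v (n + 1))) (n : ℕ) :
    dist (v n) (v (n + 1)) ≤ 2 * k / M (v 0) / 2 / 2 ^ n := calc
  dist (v n) (v (n + 1)) ≤ k / M (v n) := hd n
  _ ≤ k / (2 ^ n * M (v 0)) :=
    div_le_div_of_nonneg_left hk (by positivity) (two_pow_mul_le_of_two_mul_le hM n)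
  _ = 2 * k / M (v 0) / 2 / 2 ^ n := by field_simp

end PseudoMetric

theorem stmt_16_general {X : Type*} [MetricSpace X] [CompleteSpace X]
    (D S : Set X) (hsub : D ⊆ S) (hcl : IsClosed S)
    (k : ℝ) (hk : 0 < k) (M : X → ℝ) (hMpos : ∀ x ∈ D, 0 < M x)
    (hbdd : ∀ K : Set X, K ⊆ D → IsCompact K → ∃ B : ℝ, ∀ x ∈ K, M x ≤ B)
    (x : X) (hx : x ∈ D)
    (hMx : ENNReal.ofReal (2 * k / M x) < EMetric.infEdist x (S \ D)) :
    ∃ y ∈ D,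
      ENNReal.ofReal (2 * k / M y) < EMetric.infEdist y (S \ D) ∧
      M x ≤ M y ∧
      ∀ z ∈ D, dist z y ≤ k / M y → M z ≤ 2 * M y := by
  by_contra! hcon
  set Γ := S \ D
  have step : ∀ y, (y ∈ D ∧ ENNReal.ofReal (2 * k / M y) < infEDist y Γ ∧ M x ≤ M y) →
      ∃ z, (z ∈ D ∧ ENNReal.ofReal (2 * k / M z) < infEDist z Γ ∧ M x ≤ M z) ∧
        dist y z ≤ k / M y ∧ 2 * M y ≤ M z := by
    rintro y ⟨hyD, hyΓ, hxy⟩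
    obtain ⟨z, hzD, hzy, hMz⟩ := hcon y hyD hyΓ hxy
    have hMy := hMpos y hyD
    exact ⟨z, ⟨hzD, ofReal_div_lt_infEDist_of_dist_le hk.le hMy hMz.le hyΓ hzy, by linarith⟩,
      by rwa [dist_comm], hMz.le⟩
  obtain ⟨v, rfl, hv⟩ := exists_seq_of_forall_exists ⟨hx, hMx, le_rfl⟩ step
  have hvM n : 2 ^ n * M (v 0) ≤ M (v n) := two_pow_mul_le_of_two_mul_le (fun n => (hv n).2.2) n
  have hgeom := dist_succ_le_geometric_two_of_doubling hk.le (hMpos _ hx) (fun n => (hv n).2.1)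
    (fun n => (hv n).2.2)
  obtain ⟨a, hva⟩ := cauchySeq_tendsto_of_complete (cauchySeq_of_le_geometric_two hgeom)
  have haD : a ∈ D := by
    by_contra haD
    have haΓ : a ∈ Γ := ⟨hcl.mem_of_tendsto hva (.of_forall fun n => hsub (hv n).1.1), haD⟩
    exact (infEDist_pos_of_dist_le hMx (dist_le_of_le_geometric_two_of_tendsto₀ hgeom hva)).ne'
      (infEDist_zero_of_mem haΓ)
  obtain ⟨B, hB⟩ := hbdd (insert a (Set.range v))
    (Set.insert_subset haD (Set.range_subset_iff.2 fun n => (hv n).1.1)) hva.isCompact_insert_range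
  obtain ⟨n, hn⟩ := pow_unbounded_of_one_lt (B / M (v 0)) one_lt_two
  rw [div_lt_iff₀ (hMpos _ hx)] at hn
  linarith [hvM n, hB (v n) (Set.mem_insert_of_mem _ ⟨n, rfl⟩)]

theorem stmt_16 {X : Type*} [MetricSpace X] [CompleteSpace X]
    (D S : Set X) (hne : D.Nonempty) (hsub : D ⊆ S) (hcl : IsClosed S)
    (k : ℝ) (hk : 0 < k) (M : X → ℝ) (hMpos : ∀ x ∈ D, 0 < M x)
    (hbdd : ∀ K : Set X, K ⊆ D → IsCompact K → ∃ B : ℝ, ∀ x ∈ K, M x ≤ B)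
    (x : X) (hx : x ∈ D)
    (hMx : ENNReal.ofReal (2 * k / M x) < EMetric.infEdist x (S \ D)) :
    ∃ y ∈ D,
      ENNReal.ofReal (2 * k / M y) < EMetric.infEdist y (S \ D) ∧
      M x ≤ M y ∧
      ∀ z ∈ D, dist z y ≤ k / M y → M z ≤ 2 * M y :=
  stmt_16_general D S hsub hcl k hk M hMpos hbdd x hx hMx
end
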